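/- arXiv:2511.03606 — 6 statements merged into one kernel-verified Lean document; each statement's English description precedes it below -/
import Mathlib

section
/- Suppose Y_t = ⟨X_t, θ*⟩ + ε_t for all t ≥ 1, where θ* ∈ H satisfies ‖θ*‖ ≤ D < ∞. Let θ_t(ρ) = (V_t + ρI)^{-1} Σ_{i=1}^t X_i Y_i be the ridge regression estimator. Let (J_t)_{t≥1} be any process of random variables such that P( ‖(ρI + V_t)^{-1/2} M_t‖ ≤ J_t for all t ≥ 1 ) ≥ 1 − δ. Then P( ‖(V_t + ρI)^{1/2} (θ_t(ρ) − θ*)‖ ≤ J_t + ρ^{1/2} D for all t ≥ 1 ) ≥ 1 − δ. -/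
/-!
On the event where `‖(ρI + V_t)^{-1/2} M_t‖ ≤ J_t` for all `t`, the bound holds deterministically.
Writing `A = ρI + V_t` and `Q = A^{1/2}`, the responses satisfy `∑ Y_i X_i = A θ* - ρ θ* + M_t`, so
`Q (θ_t - θ*) = Q A⁻¹ (M_t - ρ θ*) = Q⁻¹ M_t - ρ Q⁻¹ θ*`. Since `A ≥ ρ I` and `Q` is symmetric,
`ρ ‖Q⁻¹ z‖² ≤ ⟪A Q⁻¹ z, Q⁻¹ z⟫ = ‖z‖²`, hence `ρ ‖Q⁻¹ θ*‖ ≤ √ρ D`.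
-/

open MeasureTheory Filter Real
open scoped RealInnerProductSpace

noncomputable def outerProd {H : Type*} [NormedAddCommGroup H] [InnerProductSpace ℝ H]
    (x : H) : H →L[ℝ] H :=
  (innerSL ℝ x).smulRight x

theorem mul_eq_of_mul_eq_one_of_mul_mul_eq_one {M : Type*} [Monoid M] {a b c : M}
    (hba : b * a = 1) (hc : a * a * c = 1) : a * c = b :=
  calc a * c = b * a * (a * c) := by rw [hba, one_mul]
    _ = b * (a * a * c) := by simp only [mul_assoc]
    _ = b := by rw [hc, mul_one]

section Ridge

variable {H : Type*} [NormedAddCommGroup H] [InnerProductSpace ℝ H]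

@[simp]
theorem outerProd_apply (x y : H) : outerProd x y = ⟪x, y⟫ • x := rfl

theorem mul_norm_sq_le_inner_ridge {ι : Type*} (s : Finset ι) (x : ι → H) (ρ : ℝ) (y : H) :
    ρ * ‖y‖ ^ 2 ≤ ⟪(ρ • (1 : H →L[ℝ] H) + ∑ i ∈ s, outerProd (x i)) y, y⟫ := by
  have hsum : 0 ≤ ∑ i ∈ s, ⟪x i, y⟫ * ⟪x i, y⟫ :=
    Finset.sum_nonneg fun i _ => mul_self_nonneg _
  simpa [sum_apply, inner_add_left, sum_inner, real_inner_smul_left,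
    real_inner_self_eq_norm_sq] using hsum

theorem sqrt_mul_norm_apply_le_of_comp_eq_one {Q R : H →L[ℝ] H}
    (hQ : ∀ x y, ⟪Q x, y⟫ = ⟪x, Q y⟫) (hQR : Q ∘L R = 1) {c : ℝ}
    (hc : ∀ y, c * ‖y‖ ^ 2 ≤ ⟪(Q ∘L Q) y, y⟫) (z : H) : √c * ‖R z‖ ≤ ‖z‖ := by
  have hQRz : Q (R z) = z := congrArg (· z) hQR
  have hsq : c * ‖R z‖ ^ 2 ≤ ‖z‖ ^ 2 := by
    simpa [hQ _ (R z), hQRz, real_inner_self_eq_norm_sq] using hc (R z)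
  calc √c * ‖R z‖ = √(c * ‖R z‖ ^ 2) := by
        rw [Real.sqrt_mul' _ (sq_nonneg _), Real.sqrt_sq (norm_nonneg _)]
    _ ≤ √(‖z‖ ^ 2) := Real.sqrt_le_sqrt hsq
    _ = ‖z‖ := Real.sqrt_sq (norm_nonneg _)

theorem ridge_sqrt_error_eq {ι : Type*} (s : Finset ι) (x : ι → H) (e : ι → ℝ) (θ : H)
    {ρ : ℝ} {Q Qinv Ainv : H →L[ℝ] H} (hQinv : Qinv ∘L Q = 1)
    (hQsq : Q ∘L Q = ρ • (1 : H →L[ℝ] H) + ∑ i ∈ s, outerProd (x i))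
    (hAinv : Ainv ∘L (ρ • (1 : H →L[ℝ] H) + ∑ i ∈ s, outerProd (x i)) = 1)
    (hAinv' : (ρ • (1 : H →L[ℝ] H) + ∑ i ∈ s, outerProd (x i)) ∘L Ainv = 1) :
    Q (Ainv (∑ i ∈ s, (⟪x i, θ⟫ + e i) • x i) - θ) = Qinv (∑ i ∈ s, e i • x i) - ρ • Qinv θ := by
  set A := ρ • (1 : H →L[ℝ] H) + ∑ i ∈ s, outerProd (x i)
  have hresponses : ∑ i ∈ s, (⟪x i, θ⟫ + e i) • x i = A θ + (∑ i ∈ s, e i • x i - ρ • θ) := by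
    simp only [A, add_apply, smul_apply, one_apply_eq_self, sum_apply, outerProd_apply, add_smul,
      Finset.sum_add_distrib]
    abel
  have hAθ : Ainv (A θ) = θ := congrArg (· θ) hAinv
  have hQAinv : Q ∘L Ainv = Qinv :=
    mul_eq_of_mul_eq_one_of_mul_mul_eq_one (M := H →L[ℝ] H) hQinv (by rw [← hAinv', ← hQsq]; rfl)
  have hQAinv_apply (z : H) : Q (Ainv z) = Qinv z := congrArg (· z) hQAinv
  rw [hresponses, map_add, hAθ, add_sub_cancel_left, hQAinv_apply, map_sub, map_smul]

theorem norm_ridge_sqrt_error_le {ι : Type*} (s : Finset ι) (x : ι → H) (y e : ι → ℝ) (θ : H)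
    (hy : ∀ i ∈ s, y i = ⟪x i, θ⟫ + e i) {ρ : ℝ} (hρ : 0 ≤ ρ) {Q Qinv Ainv : H →L[ℝ] H}
    (hQ : Q.IsPositive) (hQinv : Qinv ∘L Q = 1) (hQinv' : Q ∘L Qinv = 1)
    (hQsq : Q ∘L Q = ρ • (1 : H →L[ℝ] H) + ∑ i ∈ s, outerProd (x i))
    (hAinv : Ainv ∘L (ρ • (1 : H →L[ℝ] H) + ∑ i ∈ s, outerProd (x i)) = 1)
    (hAinv' : (ρ • (1 : H →L[ℝ] H) + ∑ i ∈ s, outerProd (x i)) ∘L Ainv = 1) :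
    ‖Q (Ainv (∑ i ∈ s, y i • x i) - θ)‖ ≤ ‖Qinv (∑ i ∈ s, e i • x i)‖ + √ρ * ‖θ‖ := by
  have hQinv_le (z : H) : √ρ * ‖Qinv z‖ ≤ ‖z‖ :=
    sqrt_mul_norm_apply_le_of_comp_eq_one hQ.inner_left_eq_inner_right hQinv'
      (fun v => hQsq ▸ mul_norm_sq_le_inner_ridge s x ρ v) z
  rw [Finset.sum_congr rfl fun i hi => congrArg (· • x i) (hy i hi),
    ridge_sqrt_error_eq s x e θ hQinv hQsq hAinv hAinv']
  calc ‖Qinv (∑ i ∈ s, e i • x i) - ρ • Qinv θ‖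
      ≤ ‖Qinv (∑ i ∈ s, e i • x i)‖ + ρ * ‖Qinv θ‖ := by
        simpa [norm_smul, abs_of_nonneg hρ] using norm_sub_le _ (ρ • Qinv θ)
    _ = ‖Qinv (∑ i ∈ s, e i • x i)‖ + √ρ * (√ρ * ‖Qinv θ‖) := by
        rw [← mul_assoc, Real.mul_self_sqrt hρ]
    _ ≤ ‖Qinv (∑ i ∈ s, e i • x i)‖ + √ρ * ‖θ‖ := by gcongr; exact hQinv_le θ

end Ridge

theorem stmt_9_general
    {H : Type*} [NormedAddCommGroup H] [InnerProductSpace ℝ H]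
    {Ω : Type*} {m0 : MeasurableSpace Ω} {μ : Measure Ω}
    (X : ℕ → Ω → H) (ε : ℕ → Ω → ℝ)
    (ρ : ℝ) (hρ : 0 < ρ)
    (Q Qinv : ℕ → Ω → H →L[ℝ] H)
    (hQpos : ∀ t ω, (Q t ω).IsPositive)
    (hQsq : ∀ t ω, Q t ω ∘L Q t ω =
      ρ • (1 : H →L[ℝ] H) + ∑ i ∈ Finset.Icc 1 t, outerProd (X i ω))
    (hQinv : ∀ t ω, Qinv t ω ∘L Q t ω = 1 ∧ Q t ω ∘L Qinv t ω = 1)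
    (Y : ℕ → Ω → ℝ) (θstar : H) (D : ℝ) (hD : ‖θstar‖ ≤ D)
    (hY : ∀ t, 1 ≤ t → ∀ ω, Y t ω = ⟪ X t ω, θstar ⟫ + ε t ω)
    (Ainv : ℕ → Ω → H →L[ℝ] H)
    (hAinv : ∀ t ω,
      Ainv t ω ∘L (ρ • (1 : H →L[ℝ] H) + ∑ i ∈ Finset.Icc 1 t, outerProd (X i ω)) = 1 ∧
      (ρ • (1 : H →L[ℝ] H) + ∑ i ∈ Finset.Icc 1 t, outerProd (X i ω)) ∘L Ainv t ω = 1)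
    (θhat : ℕ → Ω → H)
    (hθhat : ∀ t ω, θhat t ω = Ainv t ω (∑ i ∈ Finset.Icc 1 t, Y i ω • X i ω))
    (δ : ℝ)
    (J : ℕ → Ω → ℝ)
    (hJ : ENNReal.ofReal (1 - δ) ≤
      μ {ω | ∀ t, 1 ≤ t → ‖Qinv t ω (∑ i ∈ Finset.Icc 1 t, ε i ω • X i ω)‖ ≤ J t ω}) :
    ENNReal.ofReal (1 - δ) ≤
      μ {ω | ∀ t, 1 ≤ t →
        ‖Q t ω (θhat t ω - θstar)‖ ≤ J t ω + Real.sqrt ρ * D} := by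
  refine hJ.trans (measure_mono fun ω hω t ht => ?_)
  have hY' : ∀ i ∈ Finset.Icc 1 t, Y i ω = ⟪X i ω, θstar⟫ + ε i ω :=
    fun i hi => hY i (Finset.mem_Icc.mp hi).1 ω
  calc ‖Q t ω (θhat t ω - θstar)‖
      ≤ ‖Qinv t ω (∑ i ∈ Finset.Icc 1 t, ε i ω • X i ω)‖ + √ρ * ‖θstar‖ := by
        rw [hθhat]
        exact norm_ridge_sqrt_error_le _ _ _ _ θstar hY' hρ.le (hQpos t ω) (hQinv t ω).1
          (hQinv t ω).2 (hQsq t ω) (hAinv t ω).1 (hAinv t ω).2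
    _ ≤ J t ω + √ρ * D := by gcongr; exact hω t ht

theorem stmt_9
    {H : Type*} [NormedAddCommGroup H] [InnerProductSpace ℝ H] [CompleteSpace H]
    [SecondCountableTopology H]
    {Ω : Type*} {m0 : MeasurableSpace Ω} {μ : Measure Ω} [IsProbabilityMeasure μ]
    (ℱ : Filtration ℕ m0)
    (X : ℕ → Ω → H) (ε : ℕ → Ω → ℝ)
    (hX : ∀ t, 1 ≤ t → StronglyMeasurable[ℱ (t - 1)] (X t))
    (hεmeas : ∀ t, 1 ≤ t → StronglyMeasurable[ℱ t] (ε t))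
    (hεint : ∀ t, 1 ≤ t → Integrable (ε t) μ)
    (hε0 : ∀ t, 1 ≤ t → μ[ε t | ℱ (t - 1)] =ᵐ[μ] 0)
    (ρ : ℝ) (hρ : 0 < ρ)
    (Q Qinv : ℕ → Ω → H →L[ℝ] H)
    (hQpos : ∀ t ω, (Q t ω).IsPositive)
    (hQsq : ∀ t ω, Q t ω ∘L Q t ω =
      ρ • (1 : H →L[ℝ] H) + ∑ i ∈ Finset.Icc 1 t, outerProd (X i ω))
    (hQinv : ∀ t ω, Qinv t ω ∘L Q t ω = 1 ∧ Q t ω ∘L Qinv t ω = 1)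
    (Y : ℕ → Ω → ℝ) (θstar : H) (D : ℝ) (hD : ‖θstar‖ ≤ D)
    (hY : ∀ t, 1 ≤ t → ∀ ω, Y t ω = ⟪ X t ω, θstar ⟫ + ε t ω)
    (Ainv : ℕ → Ω → H →L[ℝ] H)
    (hAinv : ∀ t ω,
      Ainv t ω ∘L (ρ • (1 : H →L[ℝ] H) + ∑ i ∈ Finset.Icc 1 t, outerProd (X i ω)) = 1 ∧
      (ρ • (1 : H →L[ℝ] H) + ∑ i ∈ Finset.Icc 1 t, outerProd (X i ω)) ∘L Ainv t ω = 1)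
    (θhat : ℕ → Ω → H)
    (hθhat : ∀ t ω, θhat t ω = Ainv t ω (∑ i ∈ Finset.Icc 1 t, Y i ω • X i ω))
    (δ : ℝ) (hδ : δ ∈ Set.Ioo (0 : ℝ) 1)
    (J : ℕ → Ω → ℝ)
    (hJ : ENNReal.ofReal (1 - δ) ≤
      μ {ω | ∀ t, 1 ≤ t → ‖Qinv t ω (∑ i ∈ Finset.Icc 1 t, ε i ω • X i ω)‖ ≤ J t ω}) :
    ENNReal.ofReal (1 - δ) ≤
      μ {ω | ∀ t, 1 ≤ t →
        ‖Q t ω (θhat t ω - θstar)‖ ≤ J t ω + Real.sqrt ρ * D} :=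
  stmt_9_general (m0 := m0) X ε ρ hρ Q Qinv hQpos hQsq hQinv Y θstar D hD hY Ainv hAinv θhat hθhat δ
    J hJ
end

section
/- Deterministic ridge decomposition: let H be a separable real Hilbert space, ρ > 0, x_1, …, x_t ∈ H, ε_1, …, ε_t ∈ ℝ, θ* ∈ H, and y_i = ⟨x_i, θ*⟩ + ε_i. Set V = Σ_{i=1}^t x_i x_iᵀ, M = Σ_{i=1}^t x_i ε_i, and θ̂ = (V + ρI)^{-1} Σ_{i=1}^t x_i y_i. Then ‖(V + ρI)^{1/2}(θ̂ − θ*)‖ ≤ ‖(V + ρI)^{-1/2} M‖ + ρ^{1/2} ‖θ*‖. -/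
/-!
Write `A = V + ρ I = Q²`. Since `A θ̂ = V θ* + M`, the error is `θ̂ - θ* = A⁻¹ (M - ρ θ*)`, hence
`Q (θ̂ - θ*) = Q⁻¹ M - ρ Q⁻¹ θ*`. Because `V` is positive, `‖Q w‖² = ⟪V w, w⟫ + ρ ‖w‖² ≥ ρ ‖w‖²`,
so `Q⁻¹` has norm at most `ρ^{-1/2}` and the second term is at most `√ρ ‖θ*‖`.
-/

open MeasureTheory Filter Real
open scoped RealInnerProductSpace

section

variable {H : Type*} [NormedAddCommGroup H] [InnerProductSpace ℝ H]

theorem outerProd_eq_rankOne (x : H) : outerProd x = InnerProductSpace.rankOne ℝ x x := by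
  ext y
  simp [outerProd]

theorem isPositive_sum_outerProd {ι : Type*} (s : Finset ι) (x : ι → H) :
    (∑ i ∈ s, outerProd (x i)).IsPositive :=
  ContinuousLinearMap.isPositive_sum s fun i _ => outerProd_eq_rankOne (x i) ▸
    InnerProductSpace.isPositive_rankOne_self (x i)

theorem sum_outerProd_add_sum_smul_apply {ι : Type*} (s : Finset ι) (x : ι → H) (ε : ι → ℝ)
    (θ : H) :
    ∑ i ∈ s, (⟪x i, θ⟫ + ε i) • x i = (∑ i ∈ s, outerProd (x i)) θ + ∑ i ∈ s, ε i • x i := by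
  simp only [add_smul, Finset.sum_add_distrib, sum_apply, outerProd,
    ContinuousLinearMap.smulRight_apply, innerSL_apply_apply]

namespace ContinuousLinearMap

theorem sqrt_mul_norm_le_norm_apply {Q V : H →L[ℝ] H} {ρ : ℝ} (hQ : Q.IsSymmetric)
    (hV : V.IsPositive) (hQsq : Q ∘L Q = V + ρ • 1) (w : H) :
    √ρ * ‖w‖ ≤ ‖Q w‖ := by
  have hsq : ρ * ‖w‖ ^ 2 ≤ ‖Q w‖ ^ 2 := by
    have hQQ : Q (Q w) = V w + ρ • w := by simpa using congr($hQsq w)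
    calc ρ * ‖w‖ ^ 2 ≤ ⟪V w, w⟫ + ρ * ‖w‖ ^ 2 := le_add_of_nonneg_left (hV.inner_nonneg_left w)
      _ = ⟪Q (Q w), w⟫ := by
        rw [hQQ, inner_add_left, real_inner_smul_left, real_inner_self_eq_norm_sq]
      _ = ⟪Q w, Q w⟫ := hQ (Q w) w
      _ = ‖Q w‖ ^ 2 := real_inner_self_eq_norm_sq _
  simpa [Real.sqrt_mul', abs_of_nonneg] using Real.sqrt_le_sqrt hsq

theorem sub_eq_apply_sub_smul_of_leftInverse {V Ainv : H →L[ℝ] H} {ρ : ℝ}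
    (hAinv : Ainv ∘L (V + ρ • 1) = 1) (θ M : H) :
    Ainv (V θ + M) - θ = Ainv (M - ρ • θ) := by
  have hθ : Ainv (V θ + ρ • θ) = θ := by simpa using congr($hAinv θ)
  rw [show V θ + M = (V θ + ρ • θ) + (M - ρ • θ) by abel, map_add, hθ, add_sub_cancel_left]

end ContinuousLinearMap

end

theorem stmt_10_general
    {H : Type*} [NormedAddCommGroup H] [InnerProductSpace ℝ H]
    (ρ : ℝ) (hρ : 0 < ρ) (t : ℕ)
    (x : Fin t → H) (ε : Fin t → ℝ) (θstar : H)
    (y : Fin t → ℝ) (hy : ∀ i, y i = ⟪ x i, θstar ⟫ + ε i)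
    (V : H →L[ℝ] H) (hV : V = ∑ i, outerProd (x i))
    (M : H) (hM : M = ∑ i, ε i • x i)
    (Q Qinv Ainv : H →L[ℝ] H)
    (hQpos : Q.IsPositive)
    (hQsq : Q ∘L Q = V + ρ • (1 : H →L[ℝ] H))
    (hQinv : Qinv ∘L Q = 1 ∧ Q ∘L Qinv = 1)
    (hAinv : Ainv ∘L (V + ρ • (1 : H →L[ℝ] H)) = 1 ∧
      (V + ρ • (1 : H →L[ℝ] H)) ∘L Ainv = 1)
    (θhat : H) (hθhat : θhat = Ainv (∑ i, y i • x i)) :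
    ‖Q (θhat - θstar)‖ ≤ ‖Qinv M‖ + Real.sqrt ρ * ‖θstar‖ := by
  obtain ⟨hQinvQ, hQQinv⟩ := hQinv
  obtain ⟨hAinvA, hAAinv⟩ := hAinv
  have hVpos : V.IsPositive := hV ▸ isPositive_sum_outerProd _ x
  have herr : θhat - θstar = Ainv (M - ρ • θstar) := by
    rw [hθhat, funext hy, sum_outerProd_add_sum_smul_apply, ← hV, ← hM,
      ContinuousLinearMap.sub_eq_apply_sub_smul_of_leftInverse hAinvA]
  have hQAinv (u : H) : Q (Ainv u) = Qinv u := by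
    have hQQAinv : Q (Q (Ainv u)) = u := by
      simpa [← hQsq] using congr($hAAinv u)
    simpa [hQQAinv] using (congr($hQinvQ (Q (Ainv u)))).symm
  have hQinv_le (z : H) : √ρ * ‖Qinv z‖ ≤ ‖z‖ := by
    simpa [← ContinuousLinearMap.comp_apply, hQQinv] using
      ContinuousLinearMap.sqrt_mul_norm_le_norm_apply hQpos.isSymmetric hVpos hQsq (Qinv z)
  calc ‖Q (θhat - θstar)‖ = ‖Qinv M - ρ • Qinv θstar‖ := by rw [herr, hQAinv, map_sub, map_smul]
    _ ≤ ‖Qinv M‖ + ρ * ‖Qinv θstar‖ := by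
      simpa [norm_smul, abs_of_pos hρ] using norm_sub_le (Qinv M) (ρ • Qinv θstar)
    _ = ‖Qinv M‖ + √ρ * (√ρ * ‖Qinv θstar‖) := by rw [← mul_assoc, Real.mul_self_sqrt hρ.le]
    _ ≤ ‖Qinv M‖ + √ρ * ‖θstar‖ := by gcongr; exact hQinv_le θstar

theorem stmt_10
    {H : Type*} [NormedAddCommGroup H] [InnerProductSpace ℝ H] [CompleteSpace H]
    [SecondCountableTopology H]
    (ρ : ℝ) (hρ : 0 < ρ) (t : ℕ)
    (x : Fin t → H) (ε : Fin t → ℝ) (θstar : H)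
    (y : Fin t → ℝ) (hy : ∀ i, y i = ⟪ x i, θstar ⟫ + ε i)
    (V : H →L[ℝ] H) (hV : V = ∑ i, outerProd (x i))
    (M : H) (hM : M = ∑ i, ε i • x i)
    (Q Qinv Ainv : H →L[ℝ] H)
    (hQpos : Q.IsPositive)
    (hQsq : Q ∘L Q = V + ρ • (1 : H →L[ℝ] H))
    (hQinv : Qinv ∘L Q = 1 ∧ Q ∘L Qinv = 1)
    (hAinv : Ainv ∘L (V + ρ • (1 : H →L[ℝ] H)) = 1 ∧
      (V + ρ • (1 : H →L[ℝ] H)) ∘L Ainv = 1)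
    (θhat : H) (hθhat : θhat = Ainv (∑ i, y i • x i)) :
    ‖Q (θhat - θstar)‖ ≤ ‖Qinv M‖ + Real.sqrt ρ * ‖θstar‖ :=
  stmt_10_general ρ hρ t x ε θstar y hy V hV M hM Q Qinv Ainv hQpos hQsq hQinv hAinv θhat hθhat
end

section
/- Let ρ > 0 and x_1, …, x_t ∈ ℝ^d. For 1 ≤ i ≤ t let V_i = Σ_{j=1}^i x_j x_jᵀ (a d×d positive semidefinite matrix) and G_i = (ρI + V_i)^{-1/2} x_i. Then Σ_{i=1}^t ‖G_i‖² ≤ 2 log det( I + ρ^{-1} V_t ). -/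
open Matrix

private lemma tele_sum (f : ℕ → ℝ) (t : ℕ) :
    ∑ i ∈ Finset.Icc 1 t, (f i - f (i - 1)) = f t - f 0 := by
  induction t with
  | zero => simp
  | succ k ih =>
      rw [Finset.sum_Icc_succ_top (Nat.succ_le_succ (Nat.zero_le k)), ih]
      simp

private lemma det_one_add_row_mul_col {d : ℕ} (B : Matrix (Fin d) (Fin d) ℝ)
    (u v : Fin d → ℝ) :
    (1 + replicateRow Unit v * B * replicateCol Unit u).det = 1 + v ⬝ᵥ B *ᵥ u := by
  rw [Matrix.det_unique]
  simp [Matrix.mul_apply, Matrix.replicateRow_apply, Matrix.replicateCol_apply, Matrix.one_apply,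
    dotProduct, Matrix.mulVec, Finset.mul_sum, Finset.sum_mul, mul_assoc]
  rw [Finset.sum_comm]

private lemma posdef_smul_one {d : ℕ} {ρ : ℝ} (hρ : 0 < ρ) :
    (ρ • (1 : Matrix (Fin d) (Fin d) ℝ)).PosDef := by
  refine Matrix.PosDef.of_dotProduct_mulVec_pos ?_ (fun y hy => ?_)
  · simp [Matrix.IsHermitian]
  · have h0 : 0 < y ⬝ᵥ y := by
      have := Matrix.dotProduct_self_star_pos_iff.mpr hy
      rwa [star_trivial] at this
    rw [Matrix.smul_mulVec, Matrix.one_mulVec, star_trivial, dotProduct_smul,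
      smul_eq_mul]
    exact mul_pos hρ h0

private lemma posdef_sq {d : ℕ} {Q : Matrix (Fin d) (Fin d) ℝ} (hQ : Q.PosDef) :
    (Q * Q).PosDef := by
  have hsymm : Qᵀ = Q := by
    have h := hQ.isHermitian
    rwa [Matrix.IsHermitian, Matrix.conjTranspose_eq_transpose_of_trivial] at h
  refine Matrix.PosDef.of_dotProduct_mulVec_pos ?_ (fun y hy => ?_)
  · rw [Matrix.IsHermitian, Matrix.conjTranspose_eq_transpose_of_trivial,
      Matrix.transpose_mul, hsymm]
  · have hy' : Q *ᵥ y ≠ 0 := by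
      intro h0
      have h := hQ.dotProduct_mulVec_pos hy
      rw [h0] at h
      simp at h
    have hvm : star y ᵥ* Q = Q *ᵥ y := by
      rw [star_trivial, ← Matrix.mulVec_transpose, hsymm]
    rw [← Matrix.mulVec_mulVec, Matrix.dotProduct_mulVec, hvm]
    have := Matrix.dotProduct_self_star_pos_iff.mpr hy'
    rwa [star_trivial] at this

theorem stmt_12 (d : ℕ) (ρ : ℝ) (hρ : 0 < ρ) (t : ℕ)
    (x : ℕ → Fin d → ℝ)
    (V : ℕ → Matrix (Fin d) (Fin d) ℝ)
    (hV : ∀ i, V i = ∑ j ∈ Finset.Icc 1 i, vecMulVec (x j) (x j))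
    (Q : ℕ → Matrix (Fin d) (Fin d) ℝ)
    (hQ : ∀ i, 1 ≤ i → i ≤ t → (Q i).PosDef ∧
      Q i * Q i = ρ • (1 : Matrix (Fin d) (Fin d) ℝ) + V i)
    (G : ℕ → Fin d → ℝ) (hG : ∀ i, G i = (Q i)⁻¹ *ᵥ x i) :
    ∑ i ∈ Finset.Icc 1 t, G i ⬝ᵥ G i ≤
      2 * Real.log ((1 + ρ⁻¹ • V t).det) := by
  classical
  set M : ℕ → Matrix (Fin d) (Fin d) ℝ :=
    fun i => ρ • (1 : Matrix (Fin d) (Fin d) ℝ) + V i with hMdef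
  have hM0 : M 0 = ρ • (1 : Matrix (Fin d) (Fin d) ℝ) := by
    simp only [hMdef, hV 0]
    simp
  have hMpd : ∀ i, i ≤ t → (M i).PosDef := by
    intro i hit
    rcases Nat.eq_zero_or_pos i with h0 | h1
    · subst h0; rw [hM0]; exact posdef_smul_one hρ
    · obtain ⟨hQpd, hQsq⟩ := hQ i h1 hit
      have hMi : M i = Q i * Q i := hQsq.symm
      rw [hMi]; exact posdef_sq hQpd
  have key : ∀ i ∈ Finset.Icc 1 t,
      (G i ⬝ᵥ G i ≤ Real.log (M i).det - Real.log (M (i - 1)).det ∧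
        0 ≤ Real.log (M i).det - Real.log (M (i - 1)).det) := by
    intro i hi
    rw [Finset.mem_Icc] at hi
    obtain ⟨h1, hit⟩ := hi
    obtain ⟨hQpd, hQsq⟩ := hQ i h1 hit
    obtain ⟨k, rfl⟩ : ∃ k, i = k + 1 := ⟨i - 1, (Nat.succ_pred_eq_of_pos h1).symm⟩
    simp only [Nat.add_sub_cancel]
    have hMipd : (M (k + 1)).PosDef := hMpd (k + 1) hit
    have hMkpd : (M k).PosDef := hMpd k (by omega)
    have hdetMi_pos := hMipd.det_pos
    have hdetMk_pos := hMkpd.det_pos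
    set si : ℝ := x (k + 1) ⬝ᵥ (M (k + 1))⁻¹ *ᵥ x (k + 1) with hsi
    have hMi : M (k + 1) = Q (k + 1) * Q (k + 1) := hQsq.symm
    have hMstep : M (k + 1) = M k + vecMulVec (x (k + 1)) (x (k + 1)) := by
      show ρ • 1 + V (k + 1) = ρ • 1 + V k + vecMulVec (x (k + 1)) (x (k + 1))
      rw [hV (k + 1), hV k, Finset.sum_Icc_succ_top (Nat.succ_le_succ (Nat.zero_le k)),
        add_assoc]
    have hcol : replicateCol Unit (-(x (k + 1))) * replicateRow Unit (x (k + 1))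
        = -(vecMulVec (x (k + 1)) (x (k + 1))) := by
      ext a b
      simp [Matrix.mul_apply, Matrix.replicateCol_apply, Matrix.replicateRow_apply, Matrix.vecMulVec_apply]
    have hMk_eq : M k = M (k + 1) + replicateCol Unit (-(x (k + 1))) * replicateRow Unit (x (k + 1)) := by
      rw [hcol, hMstep]
      abel
    have hdet : (M k).det = (M (k + 1)).det * (1 - si) := by
      rw [hMk_eq, Matrix.det_add_replicateCol_mul_replicateRow (isUnit_iff_ne_zero.mpr hdetMi_pos.ne'),
        det_one_add_row_mul_col, Matrix.mulVec_neg, dotProduct_neg, ← hsi,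
        ← sub_eq_add_neg]
    have hs_nonneg : 0 ≤ si := by
      have h := (Matrix.posSemidef_iff_dotProduct_mulVec.mp hMipd.inv.posSemidef).2 (x (k + 1))
      rwa [star_trivial, ← hsi] at h
    have h1s : 0 < 1 - si := by
      by_contra hcon
      push_neg at hcon
      have h2 : (M (k + 1)).det * (1 - si) ≤ 0 :=
        mul_nonpos_of_nonneg_of_nonpos hdetMi_pos.le hcon
      linarith
    have hloglog : Real.log (M k).det
        = Real.log (M (k + 1)).det + Real.log (1 - si) := by
      rw [hdet, Real.log_mul hdetMi_pos.ne' h1s.ne']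
    have hlog_le : Real.log (1 - si) ≤ -si := by
      have := Real.log_le_sub_one_of_pos h1s
      linarith
    have hlog_nonpos : Real.log (1 - si) ≤ 0 :=
      Real.log_nonpos (by linarith) (by linarith)
    have hGs : G (k + 1) ⬝ᵥ G (k + 1) = si := by
      have hsymm : (Q (k + 1))ᵀ = Q (k + 1) := by
        have h := hQpd.isHermitian
        rwa [Matrix.IsHermitian, Matrix.conjTranspose_eq_transpose_of_trivial] at h
      have hinv_symm : ((Q (k + 1))⁻¹)ᵀ = (Q (k + 1))⁻¹ := by
        rw [Matrix.transpose_nonsing_inv, hsymm]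
      rw [hG, hsi]
      calc ((Q (k + 1))⁻¹ *ᵥ x (k + 1)) ⬝ᵥ ((Q (k + 1))⁻¹ *ᵥ x (k + 1))
          = (x (k + 1) ᵥ* ((Q (k + 1))⁻¹)ᵀ) ⬝ᵥ ((Q (k + 1))⁻¹ *ᵥ x (k + 1)) := by
            rw [Matrix.vecMul_transpose]
        _ = x (k + 1) ⬝ᵥ ((Q (k + 1))⁻¹)ᵀ *ᵥ ((Q (k + 1))⁻¹ *ᵥ x (k + 1)) := by
            simp [Matrix.dotProduct_mulVec, Matrix.vecMul_vecMul, Matrix.mulVec_mulVec]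
        _ = x (k + 1) ⬝ᵥ (M (k + 1))⁻¹ *ᵥ x (k + 1) := by
            rw [Matrix.mulVec_mulVec, hinv_symm, ← Matrix.mul_inv_rev, ← hMi]
    constructor
    · rw [hGs, hloglog]; linarith
    · rw [hloglog]; linarith
  have hsum_le : ∑ i ∈ Finset.Icc 1 t, G i ⬝ᵥ G i
      ≤ Real.log (M t).det - Real.log (M 0).det := by
    calc ∑ i ∈ Finset.Icc 1 t, G i ⬝ᵥ G i
        ≤ ∑ i ∈ Finset.Icc 1 t,
            (Real.log (M i).det - Real.log (M (i - 1)).det) :=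
          Finset.sum_le_sum fun i hi => (key i hi).1
      _ = Real.log (M t).det - Real.log (M 0).det :=
          tele_sum (fun i => Real.log (M i).det) t
  have hnn : 0 ≤ Real.log (M t).det - Real.log (M 0).det := by
    rw [← tele_sum (fun i => Real.log (M i).det) t]
    exact Finset.sum_nonneg fun i hi => (key i hi).2
  have hsc : (1 : Matrix (Fin d) (Fin d) ℝ) + ρ⁻¹ • V t = ρ⁻¹ • M t := by
    show _ = ρ⁻¹ • (ρ • (1 : Matrix (Fin d) (Fin d) ℝ) + V t)
    rw [smul_add, smul_smul, inv_mul_cancel₀ hρ.ne', one_smul]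
  have hdetT : ((1 : Matrix (Fin d) (Fin d) ℝ) + ρ⁻¹ • V t).det
      = ρ⁻¹ ^ d * (M t).det := by
    rw [hsc, Matrix.det_smul]
    simp
  have hdet0 : (M 0).det = ρ ^ d := by
    rw [hM0, Matrix.det_smul, Matrix.det_one, mul_one]
    simp
  have hfinal : Real.log ((1 + ρ⁻¹ • V t).det)
      = Real.log (M t).det - Real.log (M 0).det := by
    rw [hdetT, Real.log_mul (by positivity) (hMpd t le_rfl).det_pos.ne',
      Real.log_pow, Real.log_inv, hdet0, Real.log_pow]
    ring
  rw [hfinal]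
  linarith
end

section
/- For every real c ∈ [0, 1] and every real z ≥ 0, it holds that exp(c z) − c z − 1 ≤ c² (exp(z) − z − 1). -/
/-! Termwise comparison of power series: `exp z - z - 1 = ∑_{n ≥ 2} zⁿ / n!`, and for `z ≥ 0`,
`0 ≤ c ≤ 1` each term of the series at `c z` is `cⁿ ≤ c²` times the corresponding term at `z`. -/

open scoped Nat

lemma Real.hasSum_exp_sub_sub_one (x : ℝ) :
    HasSum (fun n : ℕ ↦ x ^ (n + 2) / (n + 2)!) (Real.exp x - x - 1) := by
  have h := NormedSpace.expSeries_div_hasSum_exp x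
  rw [← Real.exp_eq_exp_ℝ, ← hasSum_nat_add_iff' 2] at h
  simpa [Finset.sum_range_succ, sub_sub, add_comm x 1] using h

lemma mul_pow_add_two_le {c z : ℝ} (hc0 : 0 ≤ c) (hc1 : c ≤ 1) (hz : 0 ≤ z) (n : ℕ) :
    (c * z) ^ (n + 2) ≤ c ^ 2 * z ^ (n + 2) := by
  calc (c * z) ^ (n + 2) = c ^ 2 * (c ^ n * z ^ (n + 2)) := by ring
    _ ≤ c ^ 2 * (1 * z ^ (n + 2)) := by gcongr; exact pow_le_one₀ hc0 hc1
    _ = c ^ 2 * z ^ (n + 2) := by rw [one_mul]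

theorem stmt_13 (c z : ℝ) (hc0 : 0 ≤ c) (hc1 : c ≤ 1) (hz : 0 ≤ z) :
    Real.exp (c * z) - c * z - 1 ≤ c ^ 2 * (Real.exp z - z - 1) := by
  refine hasSum_le (fun n ↦ ?_) (Real.hasSum_exp_sub_sub_one (c * z))
    ((Real.hasSum_exp_sub_sub_one z).mul_left (c ^ 2))
  rw [← mul_div_assoc]
  gcongr
  exact mul_pow_add_two_le hc0 hc1 hz n
end

section
/- Instantaneous optimistic regret bound: let H be a separable real Hilbert space, ρ > 0, 𝒳 ⊆ H, θ* ∈ H, and suppose x* ∈ 𝒳 maximizes x ↦ ⟨x, θ*⟩ over 𝒳. Let V be a bounded positive self-adjoint operator on H, c ∈ H, η ≥ 0, and define the ellipsoid Π = { f ∈ H : ‖(V + ρI)^{1/2}(f − c)‖ ≤ η }. If θ* ∈ Π and the pair (X, θ̃) ∈ 𝒳 × Π maximizes (x, f) ↦ ⟨f, x⟩ over 𝒳 × Π, then ⟨x*, θ*⟩ − ⟨X, θ*⟩ ≤ 2 η ‖(V + ρI)^{-1/2} X‖. -/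
open MeasureTheory Filter Real
open scoped RealInnerProductSpace

/-!
Optimism gives `⟪x*, θ*⟫ ≤ ⟪θ̃, X⟫`, since `(x*, θ*)` is a competitor of `(X, θ̃)`, so the regret is
at most `⟪θ̃ - θ*, X⟫`. Writing `X = Q (Q⁻¹ X)` with `Q = (V + ρI)^{1/2}` self-adjoint, this is
`⟪Q (θ̃ - θ*), Q⁻¹ X⟫`, and `‖Q (θ̃ - θ*)‖ ≤ 2η` because both points lie in the ellipsoid.
-/

def ellipsoid {E F : Type*} [Sub E] [Norm F] (Q : E → F) (c : E) (η : ℝ) : Set E :=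
  {f | ‖Q (f - c)‖ ≤ η}

theorem norm_map_sub_le_of_mem_ellipsoid {E F 𝓕 : Type*} [AddGroup E] [SeminormedAddGroup F]
    [FunLike 𝓕 E F] [AddMonoidHomClass 𝓕 E F] {Q : 𝓕} {c f g : E} {η : ℝ}
    (hf : f ∈ ellipsoid Q c η) (hg : g ∈ ellipsoid Q c η) : ‖Q (f - g)‖ ≤ 2 * η := by
  rw [← sub_sub_sub_cancel_right f g c, map_sub]
  linarith [norm_sub_le (Q (f - c)) (Q (g - c)), hf.out, hg.out]

theorem inner_sub_le_of_mem_ellipsoid {H : Type*} [NormedAddCommGroup H] [InnerProductSpace ℝ H]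
    {Q : H →ₗ[ℝ] H} (hQ : Q.IsSymmetric) {c f g x y : H} {η : ℝ} (hy : Q y = x)
    (hf : f ∈ ellipsoid Q c η) (hg : g ∈ ellipsoid Q c η) : ⟪f - g, x⟫ ≤ 2 * η * ‖y‖ :=
  calc ⟪f - g, x⟫ = ⟪Q (f - g), y⟫ := by rw [hQ, hy]
    _ ≤ ‖Q (f - g)‖ * ‖y‖ := real_inner_le_norm _ _
    _ ≤ 2 * η * ‖y‖ :=
      mul_le_mul_of_nonneg_right (norm_map_sub_le_of_mem_ellipsoid hf hg) (norm_nonneg y)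

theorem stmt_16_general
    {H : Type*} [NormedAddCommGroup H] [InnerProductSpace ℝ H]
    (𝒳 : Set H) (θstar : H)
    (xstar : H) (hxstar : xstar ∈ 𝒳)
    (c : H) (η : ℝ)
    (Q Qinv : H →L[ℝ] H)
    (hQpos : Q.IsPositive)
    (hQinv : Qinv ∘L Q = 1 ∧ Q ∘L Qinv = 1)
    (hθstar : ‖Q (θstar - c)‖ ≤ η)
    (X θt : H) (hθt : ‖Q (θt - c)‖ ≤ η)
    (hmax : ∀ x ∈ 𝒳, ∀ f : H, ‖Q (f - c)‖ ≤ η → ⟪ f, x ⟫ ≤ ⟪ θt, X ⟫) :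
    ⟪ xstar, θstar ⟫ - ⟪ X, θstar ⟫ ≤ 2 * η * ‖Qinv X‖ := by
  have hopt : ⟪θstar, xstar⟫ ≤ ⟪θt, X⟫ := hmax xstar hxstar θstar hθstar
  have hwidth : ⟪θt - θstar, X⟫ ≤ 2 * η * ‖Qinv X‖ :=
    inner_sub_le_of_mem_ellipsoid hQpos.isSymmetric (DFunLike.congr_fun hQinv.2 X) hθt hθstar
  rw [inner_sub_left] at hwidth
  linarith [real_inner_comm xstar θstar, real_inner_comm X θstar]

theorem stmt_16
    {H : Type*} [NormedAddCommGroup H] [InnerProductSpace ℝ H] [CompleteSpace H]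
    [SecondCountableTopology H]
    (ρ : ℝ) (hρ : 0 < ρ) (𝒳 : Set H) (θstar : H)
    (xstar : H) (hxstar : xstar ∈ 𝒳)
    (hxmax : ∀ x ∈ 𝒳, ⟪ x, θstar ⟫ ≤ ⟪ xstar, θstar ⟫)
    (V : H →L[ℝ] H) (hV : V.IsPositive)
    (c : H) (η : ℝ) (hη : 0 ≤ η)
    (Q Qinv : H →L[ℝ] H)
    (hQpos : Q.IsPositive)
    (hQsq : Q ∘L Q = V + ρ • (1 : H →L[ℝ] H))
    (hQinv : Qinv ∘L Q = 1 ∧ Q ∘L Qinv = 1)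
    (hθstar : ‖Q (θstar - c)‖ ≤ η)
    (X θt : H) (hX : X ∈ 𝒳) (hθt : ‖Q (θt - c)‖ ≤ η)
    (hmax : ∀ x ∈ 𝒳, ∀ f : H, ‖Q (f - c)‖ ≤ η → ⟪ f, x ⟫ ≤ ⟪ θt, X ⟫) :
    ⟪ xstar, θstar ⟫ - ⟪ X, θstar ⟫ ≤ 2 * η * ‖Qinv X‖ :=
  stmt_16_general 𝒳 θstar xstar hxstar c η Q Qinv hQpos hQinv hθstar X θt hθt hmax
end

section
/- Regret of optimistic linear bandits with valid confidence ellipsoids: let ρ > 0, let 𝒳 ⊆ ℝ^d be a set with ‖x‖² ≤ ρ for all x ∈ 𝒳, let θ* ∈ ℝ^d, and suppose x* ∈ 𝒳 maximizes x ↦ ⟨x, θ*⟩ over 𝒳. For t = 1, …, T let V_{t-1} = Σ_{i=1}^{t-1} X_i X_iᵀ, let c_{t-1} ∈ ℝ^d and η_{t-1} ≥ 0 with (η_t) nondecreasing, let Π_{t-1} = { f : ‖(V_{t-1} + ρI)^{1/2}(f − c_{t-1})‖ ≤ η_{t-1} }, and suppose θ* ∈ Π_{t-1} and that (X_t, θ̃_t)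 ∈ 𝒳 × Π_{t-1} maximizes (x, f) ↦ ⟨f, x⟩ over 𝒳 × Π_{t-1}. Then the cumulative regret satisfies R_T = Σ_{t=1}^T ( ⟨x*, θ*⟩ − ⟨X_t, θ*⟩ ) ≤ 2 η_{T-1} sqrt( 2 T log det( I + ρ^{-1} V_T ) ). -/
/-!
Write `Q = (V_{t-1} + ρI)^{1/2}` and `y_t = Q⁻¹ X_t`. Optimism gives `⟨x*, θ*⟩ ≤ ⟨θ̃_t, X_t⟩`, and
since `θ̃_t` and `θ*` both lie in the ellipsoid `Π_{t-1}`, Cauchy–Schwarz in the metric of `Q`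
bounds the instantaneous regret by `2 η_{t-1} ‖y_t‖`. By the matrix determinant lemma,
`V_t + ρI = Q (I + y_t y_tᵀ) Q` has determinant `det (V_{t-1} + ρI) · (1 + ‖y_t‖²)`, so
`log det (I + ρ⁻¹ V_T) = ∑ log (1 + ‖y_t‖²)`. As `‖X_t‖² ≤ ρ` forces `‖y_t‖² ≤ 1`, where
`u ≤ 2 log (1 + u)`, we get `∑ ‖y_t‖² ≤ 2 log det (I + ρ⁻¹ V_T)`; Cauchy–Schwarz over `t` ends it.
-/

open Matrix Finset

theorem Real.le_two_mul_log_one_add {u : ℝ} (h₀ : 0 ≤ u) (h₁ : u ≤ 1) :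
    u ≤ 2 * Real.log (1 + u) := by
  have h := Real.one_sub_inv_le_log_of_pos (x := 1 + u) (by linarith)
  have hfrac : 1 - (1 + u)⁻¹ = u / (1 + u) := by field_simp; ring
  rw [hfrac, div_le_iff₀ (by linarith)] at h
  nlinarith

variable {n : Type*} [Fintype n]

theorem Matrix.dotProduct_self_nonneg (v : n → ℝ) : 0 ≤ v ⬝ᵥ v :=
  Fintype.sum_nonneg fun i => mul_self_nonneg (v i)

theorem Matrix.abs_dotProduct_le_sqrt_mul_sqrt (a b : n → ℝ) :
    |a ⬝ᵥ b| ≤ √(a ⬝ᵥ a) * √(b ⬝ᵥ b) := by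
  rw [← Real.sqrt_mul (dotProduct_self_nonneg a)]
  refine Real.abs_le_sqrt ?_
  simpa only [dotProduct, sq] using Finset.sum_mul_sq_le_sq_mul_sq univ a b

theorem Matrix.abs_dotProduct_mulVec_le {Q : Matrix n n ℝ} (hQ : Qᵀ = Q) (v y : n → ℝ) :
    |v ⬝ᵥ (Q *ᵥ y)| ≤ √((Q *ᵥ v) ⬝ᵥ (Q *ᵥ v)) * √(y ⬝ᵥ y) := by
  rw [dotProduct_mulVec, ← mulVec_transpose, hQ]
  exact abs_dotProduct_le_sqrt_mul_sqrt _ _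

theorem optimistic_regret_le {Q : Matrix n n ℝ} (hQ : Qᵀ = Q) {xstar θstar θ c y : n → ℝ}
    {η : ℝ} (hopt : θstar ⬝ᵥ xstar ≤ θ ⬝ᵥ (Q *ᵥ y))
    (hθ : √((Q *ᵥ (θ - c)) ⬝ᵥ (Q *ᵥ (θ - c))) ≤ η)
    (hθstar : √((Q *ᵥ (θstar - c)) ⬝ᵥ (Q *ᵥ (θstar - c))) ≤ η) :
    xstar ⬝ᵥ θstar - (Q *ᵥ y) ⬝ᵥ θstar ≤ 2 * η * √(y ⬝ᵥ y) := by
  have hwidth : ∀ f, √((Q *ᵥ (f - c)) ⬝ᵥ (Q *ᵥ (f - c))) ≤ η →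
      |f ⬝ᵥ (Q *ᵥ y) - c ⬝ᵥ (Q *ᵥ y)| ≤ η * √(y ⬝ᵥ y) := fun f hf => by
    rw [← sub_dotProduct]
    exact (abs_dotProduct_mulVec_le hQ _ _).trans
      (mul_le_mul_of_nonneg_right hf (Real.sqrt_nonneg _))
  have h₁ := (abs_le.1 (hwidth θ hθ)).2
  have h₂ := (abs_le.1 (hwidth θstar hθstar)).1
  rw [dotProduct_comm xstar, dotProduct_comm (Q *ᵥ y)]
  linarith

variable [DecidableEq n]

theorem Matrix.PosDef.mulVec_inv_mulVec {Q : Matrix n n ℝ} (hQ : Q.PosDef) (x : n → ℝ) :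
    Q *ᵥ (Q⁻¹ *ᵥ x) = x := by
  rw [mulVec_mulVec, mul_nonsing_inv _ hQ.det_pos.ne'.isUnit, one_mulVec]

theorem Matrix.det_mul_self_add_vecMulVec_mulVec {Q : Matrix n n ℝ} (hQ : Qᵀ = Q)
    (y : n → ℝ) :
    (Q * Q + vecMulVec (Q *ᵥ y) (Q *ᵥ y)).det = Q.det ^ 2 * (1 + y ⬝ᵥ y) := by
  have hfactor : Q * Q + vecMulVec (Q *ᵥ y) (Q *ᵥ y) = Q * (1 + vecMulVec y y) * Q := by
    rw [Matrix.mul_add, Matrix.add_mul, Matrix.mul_one, mul_vecMulVec, vecMulVec_mul,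
      ← mulVec_transpose, hQ]
  rw [hfactor, det_mul, det_mul, vecMulVec_eq Unit, det_one_add_replicateCol_mul_replicateRow]
  ring

theorem Matrix.mul_dotProduct_self_le {ρ : ℝ} {Q V : Matrix n n ℝ} (hQ : Qᵀ = Q)
    (hV : V.PosSemidef) (hQQ : Q * Q = V + ρ • 1) (y : n → ℝ) :
    ρ * (y ⬝ᵥ y) ≤ (Q *ᵥ y) ⬝ᵥ (Q *ᵥ y) := by
  have h : (Q *ᵥ y) ⬝ᵥ (Q *ᵥ y) = y ⬝ᵥ (V *ᵥ y) + ρ * (y ⬝ᵥ y) := by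
    rw [dotProduct_mulVec, ← mulVec_transpose, hQ, mulVec_mulVec, hQQ, add_mulVec,
      smul_mulVec, one_mulVec, dotProduct_comm, dotProduct_add, dotProduct_smul, smul_eq_mul]
  have hVy : 0 ≤ y ⬝ᵥ (V *ᵥ y) := by simpa using hV.dotProduct_mulVec_nonneg y
  linarith

section EllipticalPotential

variable {ρ : ℝ} {X : ℕ → n → ℝ} {V Q : ℕ → Matrix n n ℝ}

theorem det_add_smul_one_eq_prod (hV : ∀ s, V s = ∑ i ∈ Icc 1 s, vecMulVec (X i) (X i))
    (hQ : ∀ s, (Q s).PosDef) (hQQ : ∀ s, Q s * Q s = V s + ρ • 1) (s : ℕ) :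
    (V s + ρ • 1).det = ρ ^ Fintype.card n *
      ∏ t ∈ Icc 1 s, (1 + ((Q (t - 1))⁻¹ *ᵥ X t) ⬝ᵥ ((Q (t - 1))⁻¹ *ᵥ X t)) := by
  induction s with
  | zero => simp [hV]
  | succ s ih =>
    have hQs : (Q s)ᵀ = Q s := (hQ s).isHermitian
    have hstep : V (s + 1) + ρ • 1 = Q s * Q s + vecMulVec (X (s + 1)) (X (s + 1)) := by
      rw [hQQ, hV, hV, sum_Icc_succ_top (Nat.le_add_left 1 s)]
      abel
    rw [hstep, ← (hQ s).mulVec_inv_mulVec (X (s + 1)), det_mul_self_add_vecMulVec_mulVec hQs,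
      sq, ← det_mul, hQQ, ih, prod_Icc_succ_top (Nat.le_add_left 1 s), Nat.add_sub_cancel]
    ring

theorem det_one_add_inv_smul_eq_prod (hρ : ρ ≠ 0)
    (hV : ∀ s, V s = ∑ i ∈ Icc 1 s, vecMulVec (X i) (X i))
    (hQ : ∀ s, (Q s).PosDef) (hQQ : ∀ s, Q s * Q s = V s + ρ • 1) (s : ℕ) :
    (1 + ρ⁻¹ • V s).det =
      ∏ t ∈ Icc 1 s, (1 + ((Q (t - 1))⁻¹ *ᵥ X t) ⬝ᵥ ((Q (t - 1))⁻¹ *ᵥ X t)) := by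
  rw [show 1 + ρ⁻¹ • V s = ρ⁻¹ • (V s + ρ • 1) by
      rw [smul_add, smul_smul, inv_mul_cancel₀ hρ, one_smul, add_comm],
    det_smul, det_add_smul_one_eq_prod hV hQ hQQ, ← mul_assoc, ← mul_pow,
    inv_mul_cancel₀ hρ, one_pow, one_mul]

theorem sum_dotProduct_self_le_two_mul_log_det (hρ : 0 < ρ)
    (hV : ∀ s, V s = ∑ i ∈ Icc 1 s, vecMulVec (X i) (X i))
    (hQ : ∀ s, (Q s).PosDef) (hQQ : ∀ s, Q s * Q s = V s + ρ • 1) {T : ℕ}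
    (hX : ∀ t ∈ Icc 1 T, X t ⬝ᵥ X t ≤ ρ) :
    ∑ t ∈ Icc 1 T, ((Q (t - 1))⁻¹ *ᵥ X t) ⬝ᵥ ((Q (t - 1))⁻¹ *ᵥ X t) ≤
      2 * Real.log (1 + ρ⁻¹ • V T).det := by
  set y : ℕ → n → ℝ := fun t => (Q (t - 1))⁻¹ *ᵥ X t
  have hy (t : ℕ) (ht : t ∈ Icc 1 T) : y t ⬝ᵥ y t ≤ 1 := by
    have hVpsd : (V (t - 1)).PosSemidef := by
      rw [hV]
      exact posSemidef_sum _ fun i _ => by simpa using posSemidef_vecMulVec_self_star (X i)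
    have h := mul_dotProduct_self_le (Q := Q (t - 1)) (hQ _).isHermitian hVpsd (hQQ _) (y t)
    rw [(hQ _).mulVec_inv_mulVec] at h
    nlinarith [hX t ht]
  rw [det_one_add_inv_smul_eq_prod hρ.ne' hV hQ hQQ,
    Real.log_prod fun t _ => by linarith [dotProduct_self_nonneg (y t)], mul_sum]
  exact sum_le_sum fun t ht => Real.le_two_mul_log_one_add (dotProduct_self_nonneg _) (hy t ht)

theorem sum_sqrt_le_sqrt_two_mul_log_det (hρ : 0 < ρ)
    (hV : ∀ s, V s = ∑ i ∈ Icc 1 s, vecMulVec (X i) (X i))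
    (hQ : ∀ s, (Q s).PosDef) (hQQ : ∀ s, Q s * Q s = V s + ρ • 1) {T : ℕ}
    (hX : ∀ t ∈ Icc 1 T, X t ⬝ᵥ X t ≤ ρ) :
    ∑ t ∈ Icc 1 T, √(((Q (t - 1))⁻¹ *ᵥ X t) ⬝ᵥ ((Q (t - 1))⁻¹ *ᵥ X t)) ≤
      √(2 * T * Real.log (1 + ρ⁻¹ • V T).det) := by
  refine Real.le_sqrt_of_sq_le ((sq_sum_le_card_mul_sum_sq).trans ?_)
  simp only [Nat.card_Icc, Nat.add_sub_cancel, Real.sq_sqrt (dotProduct_self_nonneg _)]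
  rw [mul_assoc, mul_left_comm]
  gcongr
  exact sum_dotProduct_self_le_two_mul_log_det hρ hV hQ hQQ hX

end EllipticalPotential

theorem stmt_17_general (d : ℕ) (ρ : ℝ) (hρ : 0 < ρ) (T : ℕ)
    (𝒳 : Set (Fin d → ℝ)) (h𝒳 : ∀ x ∈ 𝒳, x ⬝ᵥ x ≤ ρ)
    (θstar : Fin d → ℝ)
    (xstar : Fin d → ℝ) (hxstar : xstar ∈ 𝒳)
    (X : ℕ → Fin d → ℝ)
    (V : ℕ → Matrix (Fin d) (Fin d) ℝ)
    (hV : ∀ s, V s = ∑ i ∈ Finset.Icc 1 s, vecMulVec (X i) (X i))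
    (c : ℕ → Fin d → ℝ) (η : ℕ → ℝ) (hη0 : ∀ s, 0 ≤ η s) (hηmono : Monotone η)
    (Q : ℕ → Matrix (Fin d) (Fin d) ℝ)
    (hQ : ∀ s, (Q s).PosDef ∧
      Q s * Q s = V s + ρ • (1 : Matrix (Fin d) (Fin d) ℝ))
    (θt : ℕ → Fin d → ℝ)
    (hmem : ∀ t, 1 ≤ t → t ≤ T → X t ∈ 𝒳 ∧
      Real.sqrt ((Q (t - 1) *ᵥ (θt t - c (t - 1))) ⬝ᵥ (Q (t - 1) *ᵥ (θt t - c (t - 1)))) ≤ η (t - 1))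
    (hθstar : ∀ t, 1 ≤ t → t ≤ T →
      Real.sqrt ((Q (t - 1) *ᵥ (θstar - c (t - 1))) ⬝ᵥ (Q (t - 1) *ᵥ (θstar - c (t - 1)))) ≤ η (t - 1))
    (hopt : ∀ t, 1 ≤ t → t ≤ T → ∀ x ∈ 𝒳, ∀ f : Fin d → ℝ,
      Real.sqrt ((Q (t - 1) *ᵥ (f - c (t - 1))) ⬝ᵥ (Q (t - 1) *ᵥ (f - c (t - 1)))) ≤ η (t - 1) →
      f ⬝ᵥ x ≤ θt t ⬝ᵥ X t) :
    ∑ t ∈ Finset.Icc 1 T, (xstar ⬝ᵥ θstar - X t ⬝ᵥ θstar) ≤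
      2 * η (T - 1) * Real.sqrt (2 * (T : ℝ) * Real.log ((1 + ρ⁻¹ • V T).det)) := by
  set y : ℕ → Fin d → ℝ := fun t => (Q (t - 1))⁻¹ *ᵥ X t
  have hQy (t : ℕ) : Q (t - 1) *ᵥ y t = X t := (hQ _).1.mulVec_inv_mulVec _
  have hregret (t : ℕ) (ht : t ∈ Icc 1 T) :
      xstar ⬝ᵥ θstar - X t ⬝ᵥ θstar ≤ 2 * η (T - 1) * √(y t ⬝ᵥ y t) := by
    obtain ⟨h₁, h₂⟩ := mem_Icc.1 ht
    have hstep := optimistic_regret_le (Q := Q (t - 1)) (hQ _).1.isHermitian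
      (by rw [hQy]; exact hopt t h₁ h₂ xstar hxstar θstar (hθstar t h₁ h₂))
      (hmem t h₁ h₂).2 (hθstar t h₁ h₂)
    rw [hQy] at hstep
    exact hstep.trans (by gcongr; exact hηmono (by omega))
  calc ∑ t ∈ Icc 1 T, (xstar ⬝ᵥ θstar - X t ⬝ᵥ θstar)
      ≤ ∑ t ∈ Icc 1 T, 2 * η (T - 1) * √(y t ⬝ᵥ y t) := sum_le_sum hregret
    _ = 2 * η (T - 1) * ∑ t ∈ Icc 1 T, √(y t ⬝ᵥ y t) := (mul_sum _ _ _).symm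
    _ ≤ 2 * η (T - 1) * √(2 * T * Real.log (1 + ρ⁻¹ • V T).det) := by
      gcongr
      · linarith [hη0 (T - 1)]
      · exact sum_sqrt_le_sqrt_two_mul_log_det hρ hV (fun s => (hQ s).1) (fun s => (hQ s).2)
          fun t ht => h𝒳 _ (hmem t (mem_Icc.1 ht).1 (mem_Icc.1 ht).2).1

theorem stmt_17 (d : ℕ) (ρ : ℝ) (hρ : 0 < ρ) (T : ℕ) (hT : 1 ≤ T)
    (𝒳 : Set (Fin d → ℝ)) (h𝒳 : ∀ x ∈ 𝒳, x ⬝ᵥ x ≤ ρ)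
    (θstar : Fin d → ℝ)
    (xstar : Fin d → ℝ) (hxstar : xstar ∈ 𝒳)
    (hxmax : ∀ x ∈ 𝒳, x ⬝ᵥ θstar ≤ xstar ⬝ᵥ θstar)
    (X : ℕ → Fin d → ℝ)
    (V : ℕ → Matrix (Fin d) (Fin d) ℝ)
    (hV : ∀ s, V s = ∑ i ∈ Finset.Icc 1 s, vecMulVec (X i) (X i))
    (c : ℕ → Fin d → ℝ) (η : ℕ → ℝ) (hη0 : ∀ s, 0 ≤ η s) (hηmono : Monotone η)
    (Q : ℕ → Matrix (Fin d) (Fin d) ℝ)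
    (hQ : ∀ s, (Q s).PosDef ∧
      Q s * Q s = V s + ρ • (1 : Matrix (Fin d) (Fin d) ℝ))
    (θt : ℕ → Fin d → ℝ)
    (hmem : ∀ t, 1 ≤ t → t ≤ T → X t ∈ 𝒳 ∧
      Real.sqrt ((Q (t - 1) *ᵥ (θt t - c (t - 1))) ⬝ᵥ (Q (t - 1) *ᵥ (θt t - c (t - 1)))) ≤ η (t - 1))
    (hθstar : ∀ t, 1 ≤ t → t ≤ T →
      Real.sqrt ((Q (t - 1) *ᵥ (θstar - c (t - 1))) ⬝ᵥ (Q (t - 1) *ᵥ (θstar - c (t - 1)))) ≤ η (t - 1))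
    (hopt : ∀ t, 1 ≤ t → t ≤ T → ∀ x ∈ 𝒳, ∀ f : Fin d → ℝ,
      Real.sqrt ((Q (t - 1) *ᵥ (f - c (t - 1))) ⬝ᵥ (Q (t - 1) *ᵥ (f - c (t - 1)))) ≤ η (t - 1) →
      f ⬝ᵥ x ≤ θt t ⬝ᵥ X t) :
    ∑ t ∈ Finset.Icc 1 T, (xstar ⬝ᵥ θstar - X t ⬝ᵥ θstar) ≤
      2 * η (T - 1) * Real.sqrt (2 * (T : ℝ) * Real.log ((1 + ρ⁻¹ • V T).det)) :=
  stmt_17_general d ρ hρ T 𝒳 h𝒳 θstar xstar hxstar X V hV c η hη0 hηmono Q hQ θt hmem hθstar hopt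
end
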